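/- arXiv:2411.11876 — 8 statements merged into one kernel-verified Lean document; each statement's English description precedes it below -/
import Mathlib

section
/- For increasing functions f, g from a closed interval [a,b] to a closed interval [c,d] (in [0,∞]), define f⁻(x) = sup_{y<x} f(y) and g⁺(x) = inf_{y>x} g(y). Then f⁻ ≤ g if and only if f ≤ g⁺. -/
open ENNReal Set

theorem galois_left_right_approx
    (a b c d : ℝ≥0∞) (hab : a ≤ b) (hcd : c ≤ d)
    (f g : ℝ≥0∞ → ℝ≥0∞)
    (hfmem : ∀ x ∈ Set.Icc a b, f x ∈ Set.Icc c d)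
    (hgmem : ∀ x ∈ Set.Icc a b, g x ∈ Set.Icc c d)
    (hfmono : ∀ x ∈ Set.Icc a b, ∀ y ∈ Set.Icc a b, x ≤ y → f x ≤ f y)
    (hgmono : ∀ x ∈ Set.Icc a b, ∀ y ∈ Set.Icc a b, x ≤ y → g x ≤ g y) :
    (∀ x ∈ Set.Icc a b, (c ⊔ ⨆ y ∈ {y ∈ Set.Icc a b | y < x}, f y) ≤ g x) ↔
      (∀ x ∈ Set.Icc a b, f x ≤ d ⊓ ⨅ y ∈ {y ∈ Set.Icc a b | x < y}, g y) := by
  constructor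
  · intro h x hx
    refine le_inf (hfmem x hx).2 (le_iInf₂ fun y hy => ?_)
    obtain ⟨hyab, hxy⟩ := hy
    refine le_trans ?_ (h y hyab)
    exact le_sup_of_le_right (le_iSup₂ (f := fun z _ => f z) x ⟨hx, hxy⟩)
  · intro h x hx
    refine sup_le (hgmem x hx).1 (iSup₂_le fun y hy => ?_)
    obtain ⟨hyab, hyx⟩ := hy
    refine le_trans (h y hyab) ?_
    exact inf_le_of_right_le (iInf₂_le (f := fun z _ => g z) x ⟨hx, hyx⟩)
end

section
/- For an increasing sup-preserving function f : [a,b] → [c,d], defining f⁺(x) = inf_{y>x} f(y) and then (f⁺)⁻(x) = sup_{y<x} f⁺(y), one has (f⁺)⁻ = f. Dually, for an inf-preserving increasing function f, (f⁻)⁺ = f. -/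
open ENNReal Set

theorem supmap_plus_minus_eq_self
    (a b c d : ℝ≥0∞) (hab : a ≤ b) (hcd : c ≤ d)
    (f h : ℝ≥0∞ → ℝ≥0∞)
    (hfmem : ∀ x ∈ Set.Icc a b, f x ∈ Set.Icc c d)
    (hhmem : ∀ x ∈ Set.Icc a b, h x ∈ Set.Icc c d)
    (hfmono : ∀ x ∈ Set.Icc a b, ∀ y ∈ Set.Icc a b, x ≤ y → f x ≤ f y)
    (hhmono : ∀ x ∈ Set.Icc a b, ∀ y ∈ Set.Icc a b, x ≤ y → h x ≤ h y)
    (hfsup : ∀ S ⊆ Set.Icc a b, f (a ⊔ sSup S) = c ⊔ sSup (f '' S))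
    (hhinf : ∀ S ⊆ Set.Icc a b, h (b ⊓ sInf S) = d ⊓ sInf (h '' S)) :
    (∀ x ∈ Set.Icc a b,
      (c ⊔ ⨆ y ∈ {y ∈ Set.Icc a b | y < x},
        (d ⊓ ⨅ z ∈ {z ∈ Set.Icc a b | y < z}, f z)) = f x) ∧
    (∀ x ∈ Set.Icc a b,
      (d ⊓ ⨅ y ∈ {y ∈ Set.Icc a b | x < y},
        (c ⊔ ⨆ z ∈ {z ∈ Set.Icc a b | z < y}, h z)) = h x) := by
  have hfa : f a = c := by simpa using hfsup ∅ (empty_subset _)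
  have hhb : h b = d := by simpa using hhinf ∅ (empty_subset _)
  constructor
  · intro x hx
    have hFpge : ∀ y ∈ Set.Icc a b,
        f y ≤ d ⊓ ⨅ z ∈ {z ∈ Set.Icc a b | y < z}, f z := by
      intro y hy
      exact le_inf (hfmem y hy).2 (le_iInf₂ fun z hz => hfmono y hy z hz.1 hz.2.le)
    have hFple : ∀ y, ∀ z ∈ Set.Icc a b, y < z →
        (d ⊓ ⨅ w ∈ {w ∈ Set.Icc a b | y < w}, f w) ≤ f z := by
      intro y z hz hyz
      exact inf_le_of_right_le (biInf_le f ⟨hz, hyz⟩)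
    apply le_antisymm
    · exact sup_le (hfmem x hx).1 (iSup₂_le fun y hy => hFple y x hx hy.2)
    · rcases eq_or_lt_of_le hx.1 with h1 | h1
      · calc f x = c := by rw [← h1, hfa]
          _ ≤ _ := le_sup_left
      · have hSsub : Ico a x ⊆ Icc a b := fun y hy => ⟨hy.1, hy.2.le.trans hx.2⟩
        have hkey := hfsup (Ico a x) hSsub
        rw [csSup_Ico h1, sup_eq_right.2 h1.le, sSup_image] at hkey
        have hSeq : {y | y ∈ Set.Icc a b ∧ y < x} = Ico a x := by
          ext y
          exact ⟨fun hy => ⟨hy.1.1, hy.2⟩, fun hy => ⟨hSsub hy, hy.2⟩⟩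
        rw [hkey]
        refine sup_le_sup_left ?_ c
        rw [show {y ∈ Set.Icc a b | y < x} = Ico a x from hSeq]
        exact iSup₂_mono fun y hy => hFpge y (hSsub hy)
  · intro x hx
    have hHmle : ∀ y ∈ Set.Icc a b,
        (c ⊔ ⨆ z ∈ {z ∈ Set.Icc a b | z < y}, h z) ≤ h y := by
      intro y hy
      exact sup_le (hhmem y hy).1 (iSup₂_le fun z hz => hhmono z hz.1 y hy hz.2.le)
    have hHmge : ∀ y, ∀ z ∈ Set.Icc a b, z < y →
        h z ≤ c ⊔ ⨆ w ∈ {w ∈ Set.Icc a b | w < y}, h w := by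
      intro y z hz hzy
      exact le_sup_of_le_right (le_biSup h ⟨hz, hzy⟩)
    apply le_antisymm
    · rcases eq_or_lt_of_le hx.2 with h2 | h2
      · calc d ⊓ ⨅ y ∈ {y ∈ Set.Icc a b | x < y},
            (c ⊔ ⨆ z ∈ {z ∈ Set.Icc a b | z < y}, h z) ≤ d := inf_le_left
          _ = h x := by rw [h2, hhb]
      · have hSsub : Ioc x b ⊆ Icc a b := fun y hy => ⟨hx.1.trans hy.1.le, hy.2⟩
        have hkey := hhinf (Ioc x b) hSsub
        rw [csInf_Ioc h2, inf_eq_right.2 h2.le, sInf_image] at hkey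
        have hSeq : {y | y ∈ Set.Icc a b ∧ x < y} = Ioc x b := by
          ext y
          exact ⟨fun hy => ⟨hy.2, hy.1.2⟩, fun hy => ⟨hSsub hy, hy.1⟩⟩
        rw [hkey]
        refine inf_le_inf_left d ?_
        rw [show {y ∈ Set.Icc a b | x < y} = Ioc x b from hSeq]
        exact iInf₂_mono fun y hy => hHmle y (hSsub hy)
    · exact le_inf (hhmem x hx).2 (le_iInf₂ fun y hy => hHmge y x hx hy.2)
end

section
/- A distance distribution function f is continuous on a closed interval [a,b] ⊆ [0,∞] if and only if its largest quasi-inverse f∨ is strictly increasing on the interval [f(a), f(b)]. -/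
open ENNReal Set

/-- A distance distribution function: increasing `f : [0,∞] → [0,1]` with
`f 0 = 0`, `f ∞ = 1`, left continuous on `(0,∞)`. -/
def IsDDF (f : ℝ≥0∞ → ℝ≥0∞) : Prop :=
  Monotone f ∧ (∀ x, f x ≤ 1) ∧ f 0 = 0 ∧ f ⊤ = 1 ∧
    ∀ x : ℝ≥0∞, 0 < x → x < ⊤ → f x = ⨆ y ∈ Set.Iio x, f y

/-- The largest quasi-inverse `f∨ y = inf {x | f x > y}`. -/
noncomputable def qInv (f : ℝ≥0∞ → ℝ≥0∞) : ℝ≥0∞ → ℝ≥0∞ :=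
  fun y => sInf {x | y < f x}

/-! For monotone `f`, the quasi-inverse is flat exactly across the jumps of `f`: if `f x ≤ y₁` for
`x < c` and `y₂ < f x` for `x > c`, then `qInv f = c` on `[y₁, y₂]`. Hence a one-sided jump of `f`
at a point of `[a, b]` makes `qInv f` constant on a nondegenerate subinterval of `[f a, f b]`.
Conversely, if `f` is continuous on `[a, b]`, the intermediate value theorem gives
`y₁ < f xu < f xv < y₂` for any `y₁ < y₂` in `[f a, f b]`, whence
`qInv f y₁ ≤ xu < xv ≤ qInv f y₂`. -/

theorem continuousWithinAt_Icc_of_Iio_of_Ioi {α β : Type*} [TopologicalSpace α] [LinearOrder α]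
    [TopologicalSpace β] {f : α → β} {a b c : α}
    (hl : a < c → ContinuousWithinAt f (Iio c) c) (hr : c < b → ContinuousWithinAt f (Ioi c) c) :
    ContinuousWithinAt f (Icc a b) c := by
  refine continuousWithinAt_iff_continuous_left'_right'.2 ⟨?_, ?_⟩
  · rcases lt_or_ge a c with h | h
    · exact (hl h).mono inter_subset_right
    · have hempty : Icc a b ∩ Iio c = ∅ :=
        eq_empty_of_forall_notMem fun x hx => (h.trans hx.1.1).not_gt hx.2
      simp [hempty, ContinuousWithinAt]
  · rcases lt_or_ge c b with h | h
    · exact (hr h).mono inter_subset_right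
    · have hempty : Icc a b ∩ Ioi c = ∅ :=
        eq_empty_of_forall_notMem fun x hx => (hx.1.2.trans h).not_gt hx.2
      simp [hempty, ContinuousWithinAt]

section

variable {f : ℝ≥0∞ → ℝ≥0∞}

theorem qInv_eq_of_forall_lt_of_forall_gt {c y : ℝ≥0∞} (hlt : ∀ x < c, f x ≤ y)
    (hgt : ∀ x, c < x → y < f x) : qInv f y = c :=
  le_antisymm (le_of_forall_gt_imp_ge_of_dense fun x hx => sInf_le (hgt x hx))
    (le_sInf fun x hx => not_lt.1 fun hxc => (hlt x hxc).not_gt hx)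

theorem qInv_eq_qInv_of_gap {c y₁ y₂ : ℝ≥0∞} (hy : y₁ ≤ y₂) (hlt : ∀ x < c, f x ≤ y₁)
    (hgt : ∀ x, c < x → y₂ < f x) : qInv f y₁ = qInv f y₂ := by
  rw [qInv_eq_of_forall_lt_of_forall_gt hlt fun x hx => hy.trans_lt (hgt x hx),
    qInv_eq_of_forall_lt_of_forall_gt (fun x hx => (hlt x hx).trans hy) hgt]

theorem qInv_lt_qInv (hf : Monotone f) {y₁ y₂ : ℝ≥0∞} (hy : y₁ < y₂)
    (hrange : Ioo y₁ y₂ ⊆ range f) : qInv f y₁ < qInv f y₂ := by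
  obtain ⟨u, hy₁u, huy₂⟩ := exists_between hy
  obtain ⟨v, huv, hvy₂⟩ := exists_between huy₂
  obtain ⟨xu, rfl⟩ := hrange ⟨hy₁u, huv.trans hvy₂⟩
  obtain ⟨xv, rfl⟩ := hrange ⟨hy₁u.trans huv, hvy₂⟩
  calc qInv f y₁ ≤ xu := sInf_le hy₁u
    _ < xv := hf.reflect_lt huv
    _ ≤ qInv f y₂ := le_sInf fun x hx => (hf.reflect_lt (hvy₂.trans hx)).le

theorem strictMonoOn_qInv (hf : Monotone f) {s : Set ℝ≥0∞} [s.OrdConnected]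
    (hs : s ⊆ range f) : StrictMonoOn (qInv f) s := fun _ h₁ _ h₂ hy =>
  qInv_lt_qInv hf hy (Ioo_subset_Icc_self.trans ((Set.Icc_subset s h₁ h₂).trans hs))

theorem sSup_image_Iio_eq_of_strictMonoOn_qInv (hf : Monotone f) {a c : ℝ≥0∞}
    (hq : StrictMonoOn (qInv f) (Icc (f a) (f c))) (hac : a < c) :
    sSup (f '' Iio c) = f c := by
  refine le_antisymm (sSup_le (forall_mem_image.2 fun x hx => hf (le_of_lt hx))) ?_
  by_contra! hjump
  obtain ⟨y, hSy, hyc⟩ := exists_between hjump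
  have hfa : f a ≤ sSup (f '' Iio c) := le_sSup (mem_image_of_mem f hac)
  refine hSy.ne (hq.injOn ⟨hfa, hjump.le⟩ ⟨hfa.trans hSy.le, hyc.le⟩ ?_)
  exact qInv_eq_qInv_of_gap hSy.le (fun x hx => le_sSup (mem_image_of_mem f hx))
    fun x hx => hyc.trans_le (hf hx.le)

theorem sInf_image_Ioi_eq_of_strictMonoOn_qInv (hf : Monotone f) {c b : ℝ≥0∞}
    (hq : StrictMonoOn (qInv f) (Icc (f c) (f b))) (hcb : c < b) :
    sInf (f '' Ioi c) = f c := by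
  refine le_antisymm ?_ (le_sInf (forall_mem_image.2 fun x hx => hf (le_of_lt hx)))
  by_contra! hjump
  obtain ⟨y, hcy, hyI⟩ := exists_between hjump
  have hIb : sInf (f '' Ioi c) ≤ f b := sInf_le (mem_image_of_mem f hcb)
  refine hcy.ne (hq.injOn ⟨le_rfl, hf hcb.le⟩ ⟨hcy.le, (hyI.trans_le hIb).le⟩ ?_)
  exact qInv_eq_qInv_of_gap hcy.le (fun x hx => hf hx.le)
    fun x hx => hyI.trans_le (sInf_le (mem_image_of_mem f hx))

end

theorem continuousOn_iff_qInv_strictMonoOn (f : ℝ≥0∞ → ℝ≥0∞) (hf : IsDDF f)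
    (a b : ℝ≥0∞) (hab : a ≤ b) :
    ContinuousOn f (Set.Icc a b) ↔ StrictMonoOn (qInv f) (Set.Icc (f a) (f b)) := by
  have hmono : Monotone f := hf.1
  refine ⟨fun hcont => ?_, fun hq c hc => ?_⟩
  · exact strictMonoOn_qInv hmono
      ((intermediate_value_Icc hab hcont).trans (image_subset_range _ _))
  · refine continuousWithinAt_Icc_of_Iio_of_Ioi (fun hac => ?_) (fun hcb => ?_)
    · have hlim := hmono.tendsto_nhdsLT c
      rwa [sSup_image_Iio_eq_of_strictMonoOn_qInv hmono
        (hq.mono (Icc_subset_Icc_right (hmono hc.2))) hac] at hlim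
    · have hlim := hmono.tendsto_nhdsGT c
      rwa [sInf_image_Ioi_eq_of_strictMonoOn_qInv hmono
        (hq.mono (Icc_subset_Icc_left (hmono hc.1))) hcb] at hlim
end

section
/- For every distance distribution function f, the largest quasi-inverse satisfies f∨ = inf_{r ∈ [0,∞]} ε∨(r, f(r)) = inf_{p ∈ [0,1]} ε∨(f∨(p), p) pointwise, where ε∨(r,p)(y) = ∞ if p ≤ y ≤ 1 and ε∨(r,p)(y) = r if 0 ≤ y < p. -/
open ENNReal Set

/-- The largest quasi-inverse of the step function `ε(r,p)`:
`ε∨(r,p)(y) = ∞` if `p ≤ y`, and `r` if `y < p`. -/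
noncomputable def stepInv (r p : ℝ≥0∞) : ℝ≥0∞ → ℝ≥0∞ :=
  fun y => if p ≤ y then ⊤ else r

/-! Since `ε∨(r,p)(y) = ⨅ (_ : y < p), r`, the first identity is the definition of `f∨` as an
infimum. For the second, `f∨` is increasing, and any `p` with `y < p < f x` gives `f∨ p ≤ x`. -/

theorem stepInv_eq_iInf (r p y : ℝ≥0∞) : stepInv r p y = ⨅ _ : y < p, r := by
  by_cases h : y < p
  · simp [stepInv, h, not_le.mpr h]
  · simp [stepInv, h, not_lt.mp h]

theorem qInv_mono (f : ℝ≥0∞ → ℝ≥0∞) : Monotone (qInv f) :=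
  fun _ _ hyy' => sInf_le_sInf fun _ hx => lt_of_le_of_lt hyy' hx

theorem qInv_le_of_lt {f : ℝ≥0∞ → ℝ≥0∞} {x y : ℝ≥0∞} (h : y < f x) : qInv f y ≤ x :=
  sInf_le h

theorem qInv_eq_iInf_stepInv (f : ℝ≥0∞ → ℝ≥0∞) (y : ℝ≥0∞) :
    qInv f y = ⨅ r, stepInv r (f r) y := by
  simp only [qInv, stepInv_eq_iInf, sInf_eq_iInf, mem_ofPred_eq]

theorem qInv_eq_iInf_stepInv_qInv {f : ℝ≥0∞ → ℝ≥0∞} (hf : ∀ x, f x ≤ 1) (y : ℝ≥0∞) :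
    qInv f y = ⨅ p ∈ Icc (0 : ℝ≥0∞) 1, stepInv (qInv f p) p y := by
  simp only [stepInv_eq_iInf]
  refine le_antisymm (le_iInf₂ fun p _ => le_iInf fun hyp => qInv_mono f hyp.le) ?_
  refine le_sInf fun x (hx : y < f x) => ?_
  obtain ⟨p, hyp, hpf⟩ := exists_between hx
  calc ⨅ p ∈ Icc (0 : ℝ≥0∞) 1, ⨅ _ : y < p, qInv f p
      ≤ ⨅ _ : y < p, qInv f p := iInf₂_le p ⟨zero_le, hpf.le.trans (hf x)⟩
    _ = qInv f p := iInf_pos hyp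
    _ ≤ x := qInv_le_of_lt hpf

theorem qInv_eq_inf_stepInvs (f : ℝ≥0∞ → ℝ≥0∞) (hf : IsDDF f) :
    (∀ y ∈ Set.Icc (0:ℝ≥0∞) 1, qInv f y = ⨅ r : ℝ≥0∞, stepInv r (f r) y) ∧
    (∀ y ∈ Set.Icc (0:ℝ≥0∞) 1,
      qInv f y = ⨅ p ∈ Set.Icc (0:ℝ≥0∞) 1, stepInv (qInv f p) p y) :=
  ⟨fun y _ => qInv_eq_iInf_stepInv f y, fun y _ => qInv_eq_iInf_stepInv_qInv hf.2.1 y⟩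
end

section
/- Let T be a left continuous t-norm on [0,1] and L a right continuous L-operation on [0,∞]. For all d.d.f.'s f, g and all y ∈ [0,1], ((L⊗T)(f,g))∨(y) = inf{L(f∨(p), g∨(q)) : T(p,q) > y}. -/
open ENNReal Set

/-- The unit interval `[0,1]` inside `[0,∞]`. -/
def I01 : Set ℝ≥0∞ := Set.Icc 0 1

/-- A left continuous t-norm on `[0,1]`: commutative, associative, increasing in each
place, identity `1`, left continuous in each variable. -/
def IsLeftContTNorm (T : ℝ≥0∞ → ℝ≥0∞ → ℝ≥0∞) : Prop :=
  (∀ p ∈ I01, ∀ q ∈ I01, T p q ∈ I01) ∧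
  (∀ p ∈ I01, ∀ q ∈ I01, T p q = T q p) ∧
  (∀ p ∈ I01, ∀ q ∈ I01, ∀ r ∈ I01, T (T p q) r = T p (T q r)) ∧
  (∀ p ∈ I01, T p 1 = p) ∧
  (∀ q ∈ I01, ∀ p₁ ∈ I01, ∀ p₂ ∈ I01, p₁ ≤ p₂ → T p₁ q ≤ T p₂ q) ∧
  (∀ q ∈ I01, ∀ p ∈ I01, 0 < p → T p q = ⨆ p' ∈ Set.Iio p, T p' q)

/-- A right continuous `L`-operation on `[0,∞]`: commutative, associative, increasing in
each place, identity `0`, right continuous in each variable. -/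
def IsRightContLOp (L : ℝ≥0∞ → ℝ≥0∞ → ℝ≥0∞) : Prop :=
  (∀ x y, L x y = L y x) ∧
  (∀ x y z, L (L x y) z = L x (L y z)) ∧
  (∀ x, L x 0 = x) ∧
  (∀ y x₁ x₂, x₁ ≤ x₂ → L x₁ y ≤ L x₂ y) ∧
  (∀ y x, x < ⊤ → L x y = ⨅ x' ∈ Set.Ioi x, L x' y)

/-- Joint continuity of a t-norm on `[0,1] × [0,1]`. -/
def TNormContinuous (T : ℝ≥0∞ → ℝ≥0∞ → ℝ≥0∞) : Prop :=
  ContinuousOn (fun pq : ℝ≥0∞ × ℝ≥0∞ => T pq.1 pq.2) (I01 ×ˢ I01)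

/-- The tensor-product triangle function:
`(L ⊗ T)(f,g)(x) = sup {T (f r) (g s) | L r s < x}` for `x < ∞`, and `1` at `∞`. -/
noncomputable def tensor (L T : ℝ≥0∞ → ℝ≥0∞ → ℝ≥0∞) (f g : ℝ≥0∞ → ℝ≥0∞) :
    ℝ≥0∞ → ℝ≥0∞ :=
  fun x => if x = ⊤ then 1 else ⨆ r, ⨆ s, ⨆ _ : L r s < x, T (f r) (g s)

/-! For `x < ∞`, `y < (L⊗T)(f,g)(x)` means `y < T (f r) (g s)` for some `r, s` with `L r s < x`.
Left continuity of `T` lets us replace `f r, g s` by smaller levels `p < f r`, `q < g s`, for which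
`f∨ p ≤ r` and `g∨ q ≤ s`; this bounds the infimum by `x`. Conversely, right continuity of `L`
moves any `x > L (f∨ p) (g∨ q)` down to `L r s < x` with `r > f∨ p`, `s > g∨ q`, where
`f r > p` and `g s > q`, so `(L⊗T)(f,g)(x) ≥ T p q > y`. -/

lemma mem_I01_iff {x : ℝ≥0∞} : x ∈ I01 ↔ x ≤ 1 := ⟨fun h => h.2, fun h => ⟨zero_le, h⟩⟩

namespace IsLeftContTNorm

variable {T : ℝ≥0∞ → ℝ≥0∞ → ℝ≥0∞} {p q p' q' y : ℝ≥0∞}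

lemma le_one (hT : IsLeftContTNorm T) (hp : p ≤ 1) (hq : q ≤ 1) : T p q ≤ 1 :=
  (hT.1 p (mem_I01_iff.2 hp) q (mem_I01_iff.2 hq)).2

lemma comm (hT : IsLeftContTNorm T) (hp : p ≤ 1) (hq : q ≤ 1) : T p q = T q p :=
  hT.2.1 p (mem_I01_iff.2 hp) q (mem_I01_iff.2 hq)

lemma mono_left (hT : IsLeftContTNorm T) (hp : p ≤ p') (hp' : p' ≤ 1) (hq : q ≤ 1) :
    T p q ≤ T p' q :=
  hT.2.2.2.2.1 q (mem_I01_iff.2 hq) p (mem_I01_iff.2 (hp.trans hp')) p' (mem_I01_iff.2 hp') hp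

lemma mono (hT : IsLeftContTNorm T) (hp : p ≤ p') (hq : q ≤ q') (hp' : p' ≤ 1) (hq' : q' ≤ 1) :
    T p q ≤ T p' q' :=
  calc T p q ≤ T p' q := hT.mono_left hp hp' (hq.trans hq')
    _ = T q p' := hT.comm hp' (hq.trans hq')
    _ ≤ T q' p' := hT.mono_left hq hq' hp'
    _ = T p' q' := hT.comm hq' hp'

lemma zero_left (hT : IsLeftContTNorm T) (hq : q ≤ 1) : T 0 q = 0 :=
  le_antisymm
    (calc T 0 q ≤ T 0 1 := hT.mono le_rfl hq zero_le_one le_rfl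
      _ = 0 := hT.2.2.2.1 0 (mem_I01_iff.2 zero_le_one))
    zero_le

lemma exists_lt_left_of_lt (hT : IsLeftContTNorm T) (hp : p ≤ 1) (hq : q ≤ 1)
    (h : y < T p q) : ∃ p' < p, y < T p' q := by
  have hp0 : 0 < p := by
    refine pos_iff_ne_zero.2 ?_
    rintro rfl
    rw [hT.zero_left hq] at h
    exact ENNReal.not_lt_zero h
  rw [hT.2.2.2.2.2 q (mem_I01_iff.2 hq) p (mem_I01_iff.2 hp) hp0] at h
  simpa only [lt_iSup_iff, exists_prop, mem_Iio] using h

lemma exists_lt_lt_of_lt (hT : IsLeftContTNorm T) (hp : p ≤ 1) (hq : q ≤ 1)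
    (h : y < T p q) : ∃ p' < p, ∃ q' < q, y < T p' q' := by
  obtain ⟨p', hp'p, h⟩ := hT.exists_lt_left_of_lt hp hq h
  have hp'1 : p' ≤ 1 := hp'p.le.trans hp
  rw [hT.comm hp'1 hq] at h
  obtain ⟨q', hq'q, h⟩ := hT.exists_lt_left_of_lt hq hp'1 h
  exact ⟨p', hp'p, q', hq'q, by rwa [hT.comm hp'1 (hq'q.le.trans hq)]⟩

end IsLeftContTNorm

namespace IsRightContLOp

variable {L : ℝ≥0∞ → ℝ≥0∞ → ℝ≥0∞} {a b a' b' x : ℝ≥0∞}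

lemma mono (hL : IsRightContLOp L) (ha : a ≤ a') (hb : b ≤ b') : L a b ≤ L a' b' :=
  calc L a b ≤ L a' b := hL.2.2.2.1 b a a' ha
    _ = L b a' := hL.1 a' b
    _ ≤ L b' a' := hL.2.2.2.1 a' b b' hb
    _ = L a' b' := hL.1 b' a'

lemma top_left (hL : IsRightContLOp L) (b : ℝ≥0∞) : L ⊤ b = ⊤ :=
  top_le_iff.1 <| (hL.2.2.1 ⊤).symm.trans_le (hL.mono le_rfl zero_le)

lemma exists_gt_left_of_lt (hL : IsRightContLOp L) (h : L a b < x) : ∃ a' > a, L a' b < x := by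
  have ha : a < ⊤ := by
    refine lt_top_iff_ne_top.2 ?_
    rintro rfl
    exact (h.trans_le le_top).ne (hL.top_left b)
  rw [hL.2.2.2.2 b a ha] at h
  simpa only [iInf_lt_iff, exists_prop, mem_Ioi] using h

lemma exists_gt_gt_of_lt (hL : IsRightContLOp L) (h : L a b < x) :
    ∃ a' > a, ∃ b' > b, L a' b' < x := by
  obtain ⟨a', ha'a, h⟩ := hL.exists_gt_left_of_lt h
  rw [hL.1] at h
  obtain ⟨b', hb'b, h⟩ := hL.exists_gt_left_of_lt h
  exact ⟨a', ha'a, b', hb'b, by rwa [hL.1]⟩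

end IsRightContLOp

section QuasiInverse

variable {f : ℝ≥0∞ → ℝ≥0∞} {p r : ℝ≥0∞}

lemma qInv_le_of_lt_apply (h : p < f r) : qInv f p ≤ r := sInf_le h

lemma lt_apply_of_qInv_lt (hf : Monotone f) (h : qInv f p < r) : p < f r := by
  obtain ⟨r', hr', hr'r⟩ := sInf_lt_iff.1 h
  exact hr'.trans_le (hf hr'r.le)

end QuasiInverse

section Tensor

variable {L T : ℝ≥0∞ → ℝ≥0∞ → ℝ≥0∞} {f g : ℝ≥0∞ → ℝ≥0∞} {x y p q : ℝ≥0∞}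

lemma tensor_top : tensor L T f g ⊤ = 1 := if_pos rfl

lemma lt_tensor_iff (hx : x ≠ ⊤) :
    y < tensor L T f g x ↔ ∃ r s, L r s < x ∧ y < T (f r) (g s) := by
  simp only [tensor, if_neg hx, lt_iSup_iff, exists_prop]

lemma qInv_tensor_le (hT : IsLeftContTNorm T) (hL : IsRightContLOp L)
    (hf : Monotone f) (hg : Monotone g) (hf1 : ∀ r, f r ≤ 1) (hg1 : ∀ s, g s ≤ 1)
    (hp : p ≤ 1) (hq : q ≤ 1) (hy : y < T p q) :
    qInv (tensor L T f g) y ≤ L (qInv f p) (qInv g q) := by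
  refine le_of_forall_gt_imp_ge_of_dense fun x hx => sInf_le ?_
  show y < tensor L T f g x
  rcases eq_or_ne x ⊤ with rfl | hx_top
  · rw [tensor_top]
    exact hy.trans_le (hT.le_one hp hq)
  obtain ⟨r, hr, s, hs, hrs⟩ := hL.exists_gt_gt_of_lt hx
  refine (lt_tensor_iff hx_top).2 ⟨r, s, hrs, hy.trans_le ?_⟩
  exact hT.mono (lt_apply_of_qInv_lt hf hr).le (lt_apply_of_qInv_lt hg hs).le (hf1 r) (hg1 s)

lemma le_qInv_tensor (hT : IsLeftContTNorm T) (hL : IsRightContLOp L)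
    (hf1 : ∀ r, f r ≤ 1) (hg1 : ∀ s, g s ≤ 1) :
    ⨅ p ∈ I01, ⨅ q ∈ I01, ⨅ _ : y < T p q, L (qInv f p) (qInv g q) ≤
      qInv (tensor L T f g) y := by
  refine le_sInf fun x hx => ?_
  rcases eq_or_ne x ⊤ with rfl | hx_top
  · exact le_top
  obtain ⟨r, s, hrs, hy⟩ := (lt_tensor_iff hx_top).1 hx
  obtain ⟨p, hpr, q, hqs, hy⟩ := hT.exists_lt_lt_of_lt (hf1 r) (hg1 s) hy
  refine iInf₂_le_of_le p (mem_I01_iff.2 (hpr.le.trans (hf1 r))) <|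
    iInf₂_le_of_le q (mem_I01_iff.2 (hqs.le.trans (hg1 s))) <| iInf_le_of_le hy ?_
  exact (hL.mono (qInv_le_of_lt_apply hpr) (qInv_le_of_lt_apply hqs)).trans hrs.le

end Tensor

theorem qInv_tensor (T L : ℝ≥0∞ → ℝ≥0∞ → ℝ≥0∞)
    (hT : IsLeftContTNorm T) (hL : IsRightContLOp L)
    (f g : ℝ≥0∞ → ℝ≥0∞) (hf : IsDDF f) (hg : IsDDF g) :
    ∀ y ∈ Set.Icc (0:ℝ≥0∞) 1,
      qInv (tensor L T f g) y =
        ⨅ p ∈ I01, ⨅ q ∈ I01, ⨅ _ : y < T p q, L (qInv f p) (qInv g q) := by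
  intro y _
  refine le_antisymm ?_ (le_qInv_tensor hT hL hf.2.1 hg.2.1)
  refine le_iInf₂ fun p hp => le_iInf₂ fun q hq => le_iInf fun hy => ?_
  exact qInv_tensor_le hT hL hf.1 hg.1 hf.2.1 hg.2.1 hp.2 hq.2 hy
end

section
/- Let T be a left continuous t-norm and L a continuous L-operation on [0,∞]. Define τ_{T,L}(f,g)(x) = sup{T(f(r), g(s)) : L(r,s) ≤ x}. Then for all d.d.f.'s f, g and all x ∈ [0,∞], τ_{T,L}(f,g)(x) = sup{T(f(r), g(s)) : L(r,s) = x}. -/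
open ENNReal Set

/-- `τ_{T,L}(f,g)(x) = sup {T (f r) (g s) | L r s ≤ x}`. -/
noncomputable def tauTL (L T : ℝ≥0∞ → ℝ≥0∞ → ℝ≥0∞) (f g : ℝ≥0∞ → ℝ≥0∞) :
    ℝ≥0∞ → ℝ≥0∞ :=
  fun x => ⨆ r, ⨆ s, ⨆ _ : L r s ≤ x, T (f r) (g s)

/-
`≥` is clear since `L r s = x` implies `L r s ≤ x`. Conversely, if `L r s ≤ x`,
the continuous path `t ↦ L (max r t) (max s t)` runs from `L r s ≤ x` to `L ⊤ ⊤ = ⊤ ≥ x`, so by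
the intermediate value theorem it meets `x` at some `t`; raising `r` and `s` to `max r t` and
`max s t` can only increase `T (f r) (g s)`, as `f`, `g` and `T` are increasing.
-/

theorem IsDDF.mem_I01 {f : ℝ≥0∞ → ℝ≥0∞} (hf : IsDDF f) (x : ℝ≥0∞) : f x ∈ I01 :=
  ⟨zero_le, hf.2.1 x⟩

theorem IsLeftContTNorm.monotone₂ {T : ℝ≥0∞ → ℝ≥0∞ → ℝ≥0∞} (hT : IsLeftContTNorm T)
    {p₁ p₂ q₁ q₂ : ℝ≥0∞} (hp₁ : p₁ ∈ I01) (hp₂ : p₂ ∈ I01) (hq₁ : q₁ ∈ I01) (hq₂ : q₂ ∈ I01)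
    (hp : p₁ ≤ p₂) (hq : q₁ ≤ q₂) : T p₁ q₁ ≤ T p₂ q₂ := by
  obtain ⟨-, hcomm, -, -, hmono, -⟩ := hT
  calc T p₁ q₁ ≤ T p₂ q₁ := hmono q₁ hq₁ p₁ hp₁ p₂ hp₂ hp
    _ = T q₁ p₂ := hcomm p₂ hp₂ q₁ hq₁
    _ ≤ T q₂ p₂ := hmono p₂ hp₂ q₁ hq₁ q₂ hq₂ hq
    _ = T p₂ q₂ := hcomm q₂ hq₂ p₂ hp₂

theorem IsRightContLOp.top_top {L : ℝ≥0∞ → ℝ≥0∞ → ℝ≥0∞} (hL : IsRightContLOp L) :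
    L ⊤ ⊤ = ⊤ := by
  obtain ⟨hcomm, -, hid, hmono, -⟩ := hL
  refine top_unique ?_
  calc ⊤ = L ⊤ 0 := (hid ⊤).symm
    _ = L 0 ⊤ := hcomm ⊤ 0
    _ ≤ L ⊤ ⊤ := hmono ⊤ 0 ⊤ le_top

theorem exists_le_le_map_eq_of_map_le {L : ℝ≥0∞ → ℝ≥0∞ → ℝ≥0∞}
    (hLc : Continuous (fun xy : ℝ≥0∞ × ℝ≥0∞ => L xy.1 xy.2)) (htop : L ⊤ ⊤ = ⊤)
    {r s x : ℝ≥0∞} (hrs : L r s ≤ x) : ∃ r' s', r ≤ r' ∧ s ≤ s' ∧ L r' s' = x := by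
  have hpath : Continuous fun t => L (max r t) (max s t) :=
    hLc.comp ((continuous_const.max continuous_id).prodMk (continuous_const.max continuous_id))
  have hx : x ∈ Icc (L (max r 0) (max s 0)) (L (max r ⊤) (max s ⊤)) := by
    simpa [htop] using hrs
  obtain ⟨t, ht⟩ := intermediate_value_univ 0 ⊤ hpath hx
  exact ⟨max r t, max s t, le_max_left r t, le_max_left s t, ht⟩

theorem tau_eq_sup_on_level_sets (T L : ℝ≥0∞ → ℝ≥0∞ → ℝ≥0∞)
    (hT : IsLeftContTNorm T) (hL : IsRightContLOp L)
    (hLc : Continuous (fun xy : ℝ≥0∞ × ℝ≥0∞ => L xy.1 xy.2))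
    (f g : ℝ≥0∞ → ℝ≥0∞) (hf : IsDDF f) (hg : IsDDF g) :
    ∀ x : ℝ≥0∞, tauTL L T f g x = ⨆ r, ⨆ s, ⨆ _ : L r s = x, T (f r) (g s) := by
  intro x
  refine le_antisymm (iSup_le fun r => iSup₂_le fun s hrs => ?_)
    (iSup_mono fun r => iSup_mono fun s => iSup_mono' fun (h : L r s = x) => ⟨h.le, le_rfl⟩)
  obtain ⟨r', s', hr, hs, hx⟩ := exists_le_le_map_eq_of_map_le hLc hL.top_top hrs
  have hle : T (f r) (g s) ≤ T (f r') (g s') :=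
    hT.monotone₂ (hf.mem_I01 r) (hf.mem_I01 r') (hg.mem_I01 s) (hg.mem_I01 s')
      (hf.1 hr) (hg.1 hs)
  exact le_iSup_of_le r' (le_iSup₂_of_le s' hx hle)
end

section
/- Let T be a left continuous t-norm on [0,1] and L a right continuous L-operation on [0,∞]. Then (L⊗T)(f,g) is non-defective for all non-defective d.d.f.'s f, g if and only if L has no zero divisor, i.e., L(x,y) = ∞ implies x = ∞ or y = ∞. -/
open ENNReal Set

/-- A d.d.f. is non-defective if `sup_{x<∞} f x = 1`. -/
def NonDefective (f : ℝ≥0∞ → ℝ≥0∞) : Prop :=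
  (⨆ x ∈ Set.Iio (⊤ : ℝ≥0∞), f x) = 1

/-! If `L` has no zero divisor, then `L r s` is finite for finite `r, s`, so the values of
`(L ⊗ T)(f,g)` at finite points dominate every `T (f r) (g s)` with `r, s` finite; by left
continuity of `T` at `1` their supremum over `r` is at least `g s`, whose supremum is `1`.
Conversely, a zero divisor `L a b = ∞` with `a, b` finite makes `(L ⊗ T)(ε_a, ε_b)` vanish at
every finite point. -/

lemma mem_I01 {p : ℝ≥0∞} : p ∈ I01 ↔ p ≤ 1 := by
  simp [I01]

section TNorm

variable {T : ℝ≥0∞ → ℝ≥0∞ → ℝ≥0∞}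

lemma IsLeftContTNorm.le_one_s14 (hT : IsLeftContTNorm T) {p q : ℝ≥0∞} (hp : p ≤ 1) (hq : q ≤ 1) :
    T p q ≤ 1 :=
  mem_I01.1 (hT.1 p (mem_I01.2 hp) q (mem_I01.2 hq))

lemma IsLeftContTNorm.one_left (hT : IsLeftContTNorm T) {q : ℝ≥0∞} (hq : q ≤ 1) : T 1 q = q := by
  rw [hT.2.1 1 (mem_I01.2 le_rfl) q (mem_I01.2 hq), hT.2.2.2.1 q (mem_I01.2 hq)]

lemma IsLeftContTNorm.zero_left_s14 (hT : IsLeftContTNorm T) {q : ℝ≥0∞} (hq : q ≤ 1) : T 0 q = 0 := by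
  refine le_antisymm ?_ zero_le
  calc T 0 q = T q 0 := hT.2.1 0 (mem_I01.2 zero_le_one) q (mem_I01.2 hq)
    _ ≤ T 1 0 := hT.2.2.2.2.1 0 (mem_I01.2 zero_le_one) q (mem_I01.2 hq) 1 (mem_I01.2 le_rfl) hq
    _ = 0 := hT.one_left zero_le_one

lemma IsLeftContTNorm.zero_right (hT : IsLeftContTNorm T) {p : ℝ≥0∞} (hp : p ≤ 1) : T p 0 = 0 := by
  rw [hT.2.1 p (mem_I01.2 hp) 0 (mem_I01.2 zero_le_one), hT.zero_left_s14 hp]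

lemma IsLeftContTNorm.le_biSup_left (hT : IsLeftContTNorm T) {ι : Type*} {S : Set ι}
    {a : ι → ℝ≥0∞} (ha : ∀ i, a i ≤ 1) (hsup : ⨆ i ∈ S, a i = 1) {q : ℝ≥0∞} (hq : q ≤ 1) :
    q ≤ ⨆ i ∈ S, T (a i) q := by
  calc q = T 1 q := (hT.one_left hq).symm
    _ = ⨆ p ∈ Iio 1, T p q := hT.2.2.2.2.2 q (mem_I01.2 hq) 1 (mem_I01.2 le_rfl) zero_lt_one
    _ ≤ ⨆ i ∈ S, T (a i) q := iSup₂_le fun p hp => by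
        have hp' : p < ⨆ i ∈ S, a i := hsup ▸ hp
        obtain ⟨i, hi, hpi⟩ : ∃ i ∈ S, p < a i := by
          simpa only [lt_iSup_iff, exists_prop] using hp'
        refine le_trans ?_ (le_iSup₂ (f := fun i _ => T (a i) q) i hi)
        exact hT.2.2.2.2.1 q (mem_I01.2 hq) p (mem_I01.2 hp.out.le) (a i) (mem_I01.2 (ha i)) hpi.le

end TNorm

lemma IsRightContLOp.mono_s14 {L : ℝ≥0∞ → ℝ≥0∞ → ℝ≥0∞} (hL : IsRightContLOp L)
    {x₁ x₂ y₁ y₂ : ℝ≥0∞} (hx : x₁ ≤ x₂) (hy : y₁ ≤ y₂) : L x₁ y₁ ≤ L x₂ y₂ :=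
  calc L x₁ y₁ ≤ L x₂ y₁ := hL.2.2.2.1 y₁ x₁ x₂ hx
    _ = L y₁ x₂ := hL.1 x₂ y₁
    _ ≤ L y₂ x₂ := hL.2.2.2.1 x₂ y₁ y₂ hy
    _ = L x₂ y₂ := hL.1 y₂ x₂

/-- The d.d.f. `ε_a` of a distance that is almost surely equal to `a`. -/
noncomputable def stepDDF (a : ℝ≥0∞) : ℝ≥0∞ → ℝ≥0∞ := fun r => if a < r then 1 else 0

lemma stepDDF_le_one (a r : ℝ≥0∞) : stepDDF a r ≤ 1 := by
  unfold stepDDF; split <;> simp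

lemma stepDDF_of_le {a r : ℝ≥0∞} (h : r ≤ a) : stepDDF a r = 0 := by
  simp [stepDDF, not_lt.2 h]

lemma monotone_stepDDF (a : ℝ≥0∞) : Monotone (stepDDF a) := by
  intro u v huv
  by_cases hu : a < u
  · simp [stepDDF, hu, hu.trans_le huv]
  · simp [stepDDF, hu]

lemma isDDF_stepDDF {a : ℝ≥0∞} (ha : a ≠ ⊤) : IsDDF (stepDDF a) := by
  refine ⟨monotone_stepDDF a, stepDDF_le_one a, stepDDF_of_le zero_le,
    by simp [stepDDF, lt_top_iff_ne_top, ha], fun v _ _ => ?_⟩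
  refine le_antisymm ?_ (iSup₂_le fun y hy => monotone_stepDDF a (le_of_lt hy))
  by_cases hav : a < v
  · obtain ⟨y, hay, hyv⟩ := exists_between hav
    refine le_trans ?_ (le_iSup₂ (f := fun y _ => stepDDF a y) y hyv)
    simp [stepDDF, hav, hay]
  · simp [stepDDF, hav]

lemma nonDefective_stepDDF {a : ℝ≥0∞} (ha : a ≠ ⊤) : NonDefective (stepDDF a) := by
  obtain ⟨v, hav, hvt⟩ := exists_between (lt_top_iff_ne_top.2 ha)
  refine le_antisymm (iSup₂_le fun y _ => stepDDF_le_one a y) ?_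
  refine le_trans ?_ (le_iSup₂ (f := fun y _ => stepDDF a y) v hvt)
  simp [stepDDF, hav]

lemma not_nonDefective_of_eq_zero {f : ℝ≥0∞ → ℝ≥0∞} (hf : ∀ x, x ≠ ⊤ → f x = 0) :
    ¬ NonDefective f := by
  intro h
  have : (⨆ x ∈ Iio (⊤ : ℝ≥0∞), f x) = 0 := by
    simp only [ENNReal.iSup_eq_zero]
    exact fun x hx => hf x (ne_of_lt hx)
  exact zero_ne_one (this.symm.trans h)

section Tensor

variable {L T : ℝ≥0∞ → ℝ≥0∞ → ℝ≥0∞} {f g : ℝ≥0∞ → ℝ≥0∞}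

lemma tensor_le_one (hT : IsLeftContTNorm T) (hf : ∀ r, f r ≤ 1) (hg : ∀ s, g s ≤ 1)
    (x : ℝ≥0∞) : tensor L T f g x ≤ 1 := by
  unfold tensor
  split
  · exact le_rfl
  · exact iSup_le fun r => iSup_le fun s => iSup_le fun _ => hT.le_one_s14 (hf r) (hg s)

lemma le_tensor {r s x : ℝ≥0∞} (hx : x ≠ ⊤) (h : L r s < x) :
    T (f r) (g s) ≤ tensor L T f g x := by
  simp only [tensor, hx, if_false]
  exact le_iSup_of_le r (le_iSup_of_le s (le_iSup_of_le h le_rfl))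

lemma le_biSup_tensor {r s : ℝ≥0∞} (h : L r s ≠ ⊤) :
    T (f r) (g s) ≤ ⨆ x ∈ Iio (⊤ : ℝ≥0∞), tensor L T f g x := by
  obtain ⟨x, hrs, hx⟩ := exists_between (lt_top_iff_ne_top.2 h)
  exact (le_tensor (ne_of_lt hx) hrs).trans (le_iSup₂ (f := fun x _ => tensor L T f g x) x hx)

/-- `L r s < x < ⊤` forces `r ≤ a` or `s ≤ b`, by monotonicity of `L`. -/
lemma tensor_stepDDF_of_eq_top (hT : IsLeftContTNorm T) (hL : IsRightContLOp L)
    {a b x : ℝ≥0∞} (hab : L a b = ⊤) (hx : x ≠ ⊤) :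
    tensor L T (stepDDF a) (stepDDF b) x = 0 := by
  simp only [tensor, hx, if_false, ENNReal.iSup_eq_zero]
  intro r s hrs
  by_cases hr : r ≤ a
  · rw [stepDDF_of_le hr, hT.zero_left_s14 (stepDDF_le_one b s)]
  by_cases hs : s ≤ b
  · rw [stepDDF_of_le hs, hT.zero_right (stepDDF_le_one a r)]
  have : L a b ≤ L r s := hL.mono_s14 (not_le.1 hr).le (not_le.1 hs).le
  exact absurd (hrs.trans hx.lt_top) (by simp [← hab, not_lt.2 this])

lemma nonDefective_tensor (hT : IsLeftContTNorm T)
    (hL : ∀ x y : ℝ≥0∞, L x y = ⊤ → x = ⊤ ∨ y = ⊤) (hf : ∀ r, f r ≤ 1) (hg : ∀ s, g s ≤ 1)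
    (hfn : NonDefective f) (hgn : NonDefective g) : NonDefective (tensor L T f g) := by
  refine le_antisymm (iSup₂_le fun x _ => tensor_le_one hT hf hg x) ?_
  calc (1 : ℝ≥0∞) = ⨆ s ∈ Iio (⊤ : ℝ≥0∞), g s := hgn.symm
    _ ≤ ⨆ s ∈ Iio (⊤ : ℝ≥0∞), ⨆ r ∈ Iio (⊤ : ℝ≥0∞), T (f r) (g s) :=
      iSup₂_mono fun s _ => hT.le_biSup_left hf hfn (hg s)
    _ ≤ ⨆ x ∈ Iio (⊤ : ℝ≥0∞), tensor L T f g x := iSup₂_le fun s hs => iSup₂_le fun r hr =>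
      le_biSup_tensor fun h => (hL r s h).elim (ne_of_lt hr) (ne_of_lt hs)

end Tensor

theorem tensor_nondefective_iff_no_zero_divisor (T L : ℝ≥0∞ → ℝ≥0∞ → ℝ≥0∞)
    (hT : IsLeftContTNorm T) (hL : IsRightContLOp L) :
    (∀ f g : ℝ≥0∞ → ℝ≥0∞, IsDDF f → IsDDF g → NonDefective f → NonDefective g →
      NonDefective (tensor L T f g)) ↔
    (∀ x y : ℝ≥0∞, L x y = ⊤ → x = ⊤ ∨ y = ⊤) := by
  constructor
  · intro H a b hab
    by_contra! hfin
    exact not_nonDefective_of_eq_zero (fun x hx => tensor_stepDDF_of_eq_top hT hL hab hx)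
      (H _ _ (isDDF_stepDDF hfin.1) (isDDF_stepDDF hfin.2)
        (nonDefective_stepDDF hfin.1) (nonDefective_stepDDF hfin.2))
  · intro H f g hf hg hfn hgn
    exact nonDefective_tensor hT H hf.2.1 hg.2.1 hfn hgn
end

section
/- Let T be a left continuous t-norm on [0,1] and L a right continuous L-operation on [0,∞]. If (L⊗T)(f,g) is continuous on (0,∞] whenever f is a d.d.f. continuous on (0,∞] and g is a continuous d.d.f., then T is a continuous t-norm. -/
open ENNReal Set

/-!
For `p ≤ 1` let `f` jump from `0` to `p` at the origin, stay at `p` on `(0,1]` and then rise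
continuously to `1`, and let `g = min · 1`. On `(0,1]` the tensor product `(L ⊗ T)(f,g)` is
`x ↦ sup_{s < x} T(p,s)`, which is `T(p,x)` by left continuity of `T`; hence every section of `T`
is continuous on `(0,1]`, and at `0` because `T(p,x) ≤ x`. A function that is monotone in one
variable and separately continuous is jointly continuous.
-/

open Filter Topology Function

section SeparatelyContinuous

variable {α β γ : Type*} [TopologicalSpace α] [LinearOrder α] [OrderTopology α]
  [TopologicalSpace β] [TopologicalSpace γ] [LinearOrder γ] [OrderTopology γ]

lemma exists_mem_eventually_le_of_mem_nhds {s : Set α} {p : α} (hs : s ∈ 𝓝 p) :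
    ∃ x₀ ∈ s, ∀ᶠ x in 𝓝 p, x₀ ≤ x := by
  by_cases h : (𝓝[<] p).NeBot
  · obtain ⟨x₀, hx₀p, hx₀⟩ := Filter.Eventually.exists_lt hs
    exact ⟨x₀, hx₀, (eventually_gt_nhds hx₀p).mono fun _ => le_of_lt⟩
  · rw [not_neBot] at h
    refine ⟨p, mem_of_mem_nhds hs, ?_⟩
    rw [← nhdsLT_sup_nhdsGE p, h, bot_sup_eq]
    exact self_mem_nhdsWithin

lemma eventually_lt_uncurry_of_monotone_left {F : α → β → γ}
    (hmono : ∀ y, Monotone (F · y)) (hc₁ : ∀ y, Continuous (F · y))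
    (hc₂ : ∀ x, Continuous (F x)) {a : γ} {p : α} {q : β}
    (ha : a < F p q) : ∀ᶠ z in 𝓝 (p, q), a < uncurry F z := by
  obtain ⟨x₀, hx₀, hle⟩ :=
    exists_mem_eventually_le_of_mem_nhds ((hc₁ q).continuousAt.eventually (lt_mem_nhds ha))
  have hy : ∀ᶠ y in 𝓝 q, a < F x₀ y := (hc₂ x₀).continuousAt.eventually (lt_mem_nhds hx₀)
  rw [nhds_prod_eq]
  filter_upwards [hle.prod_mk hy] with z ⟨hx, hy⟩
  exact hy.trans_le (hmono z.2 hx)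

theorem continuous_uncurry_of_monotone_left {F : α → β → γ}
    (hmono : ∀ y, Monotone (F · y)) (hc₁ : ∀ y, Continuous (F · y))
    (hc₂ : ∀ x, Continuous (F x)) : Continuous (uncurry F) :=
  continuous_iff_continuousAt.2 fun _ => tendsto_order.2
    ⟨fun _ ha => eventually_lt_uncurry_of_monotone_left hmono hc₁ hc₂ ha,
     fun _ hb => eventually_lt_uncurry_of_monotone_left (α := αᵒᵈ) (γ := γᵒᵈ)
      (fun y => (hmono y).dual) hc₁ hc₂ hb⟩

end SeparatelyContinuous

lemma mem_I01_s15 {x : ℝ≥0∞} (hx : x ≤ 1) : x ∈ I01 := ⟨zero_le, hx⟩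

namespace IsLeftContTNorm

variable {T : ℝ≥0∞ → ℝ≥0∞ → ℝ≥0∞}

lemma comm_s15 (hT : IsLeftContTNorm T) {x y : ℝ≥0∞} (hx : x ≤ 1) (hy : y ≤ 1) :
    T x y = T y x :=
  hT.2.1 x (mem_I01_s15 hx) y (mem_I01_s15 hy)

lemma mono_left_s15 (hT : IsLeftContTNorm T) {q x y : ℝ≥0∞} (hq : q ≤ 1) (hy : y ≤ 1)
    (hxy : x ≤ y) : T x q ≤ T y q :=
  hT.2.2.2.2.1 q (mem_I01_s15 hq) x (mem_I01_s15 (hxy.trans hy)) y (mem_I01_s15 hy) hxy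

lemma mono_right (hT : IsLeftContTNorm T) {p x y : ℝ≥0∞} (hp : p ≤ 1) (hy : y ≤ 1)
    (hxy : x ≤ y) : T p x ≤ T p y := by
  rw [hT.comm_s15 hp (hxy.trans hy), hT.comm_s15 hp hy]
  exact hT.mono_left_s15 hp hy hxy

lemma le_right (hT : IsLeftContTNorm T) {x y : ℝ≥0∞} (hx : x ≤ 1) (hy : y ≤ 1) : T x y ≤ y :=
  calc T x y ≤ T 1 y := hT.mono_left_s15 hy le_rfl hx
    _ = y := by rw [hT.comm_s15 le_rfl hy, hT.2.2.2.1 y (mem_I01_s15 hy)]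

lemma eq_iSup_Iio_right (hT : IsLeftContTNorm T) {p x : ℝ≥0∞} (hp : p ≤ 1) (hx : x ≤ 1)
    (hx₀ : 0 < x) : T p x = ⨆ s ∈ Iio x, T p s := by
  rw [hT.comm_s15 hp hx, hT.2.2.2.2.2 p (mem_I01_s15 hp) x (mem_I01_s15 hx) hx₀]
  exact iSup_congr fun s => iSup_congr fun hs => hT.comm_s15 ((le_of_lt hs).trans hx) hp

lemma continuousOn_I01_of_continuousOn_Ioc (hT : IsLeftContTNorm T) {p : ℝ≥0∞} (hp : p ≤ 1)
    (hc : ContinuousOn (T p) (Ioc 0 1)) : ContinuousOn (T p) I01 := by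
  intro x hx
  rcases hx.1.eq_or_lt with rfl | hx₀
  · have hT0 : T p 0 = 0 := le_antisymm (hT.le_right hp zero_le) zero_le
    rw [ContinuousWithinAt, hT0]
    exact tendsto_of_tendsto_of_tendsto_of_le_of_le' tendsto_const_nhds
      continuousWithinAt_id (Eventually.of_forall fun _ => zero_le)
      (eventually_nhdsWithin_of_forall fun y hy => hT.le_right hp hy.2)
  · refine (hc x ⟨hx₀, hx.2⟩).mono_of_mem_nhdsWithin ?_
    exact mem_of_superset (inter_mem_nhdsWithin I01 (Ioi_mem_nhds hx₀))
      fun y hy => ⟨hy.2, hy.1.2⟩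

theorem tnormContinuous_of_continuousOn (hT : IsLeftContTNorm T)
    (hslice : ∀ p ≤ 1, ContinuousOn (T p) I01) : TNormContinuous T := by
  have hclamp : Continuous fun x : ℝ≥0∞ => min x 1 := continuous_id.min continuous_const
  have hsection : ∀ p, Continuous fun x => T (min p 1) (min x 1) := fun p =>
    (hslice _ (min_le_right p 1)).comp_continuous hclamp fun x => mem_I01_s15 (min_le_right x 1)
  have hcont : Continuous (uncurry fun x y : ℝ≥0∞ => T (min x 1) (min y 1)) := by
    refine continuous_uncurry_of_monotone_left (fun y _ _ hxx' =>
        hT.mono_left_s15 (min_le_right y 1) (min_le_right _ 1) (min_le_min_right 1 hxx'))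
      (fun y => ?_) hsection
    refine (hsection y).congr fun x => ?_
    exact hT.comm_s15 (min_le_right y 1) (min_le_right x 1)
  refine hcont.continuousOn.congr fun z hz => ?_
  simp only [uncurry, min_eq_left hz.1.2, min_eq_left hz.2.2]

end IsLeftContTNorm

namespace IsRightContLOp

variable {L : ℝ≥0∞ → ℝ≥0∞ → ℝ≥0∞}

lemma le_left (hL : IsRightContLOp L) (r s : ℝ≥0∞) : r ≤ L r s := by
  simpa only [hL.1 0 r, hL.2.2.1 r, hL.1 s r] using hL.2.2.2.1 r 0 s zero_le

lemma le_right (hL : IsRightContLOp L) (r s : ℝ≥0∞) : s ≤ L r s :=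
  hL.1 s r ▸ hL.le_left s r

lemma exists_pos_lt (hL : IsRightContLOp L) {s x : ℝ≥0∞} (hs : s < x) :
    ∃ r, 0 < r ∧ L r s < x := by
  have hinf : ⨅ r ∈ Ioi 0, L r s < x := by
    rwa [← hL.2.2.2.2 s 0 zero_lt_top, hL.1, hL.2.2.1]
  simpa only [iInf_lt_iff, mem_Ioi, exists_prop] using hinf

end IsRightContLOp

lemma isDDF_of_continuousOn {f : ℝ≥0∞ → ℝ≥0∞} (hf : Monotone f) (hf_le : ∀ x, f x ≤ 1)
    (hf₀ : f 0 = 0) (hf_top : f ⊤ = 1) (hc : ContinuousOn f (Ioi 0)) : IsDDF f := by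
  refine ⟨hf, hf_le, hf₀, hf_top, fun x hx _ => ?_⟩
  have hsup : sSup (Iio x) = x := (Order.IsSuccPrelimit.of_dense x).sSup_Iio
  have := hf.map_sSup_of_continuousAt (s := Iio x)
    (by rw [hsup]; exact hc.continuousAt (Ioi_mem_nhds hx)) hf₀
  rwa [hsup, sSup_image] at this

lemma isDDF_min_one : IsDDF (min · 1) :=
  isDDF_of_continuousOn (fun _ _ h => min_le_min_right 1 h) (fun x => min_le_right x 1)
    (min_eq_left zero_le) (min_eq_right le_top) (continuous_id.min continuous_const).continuousOn

noncomputable def jumpDDF (p : ℝ≥0∞) : ℝ≥0∞ → ℝ≥0∞ :=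
  fun r => if r = 0 then 0 else min 1 (p + (r - 1))

lemma jumpDDF_eq {p r : ℝ≥0∞} (hp : p ≤ 1) (hr₀ : 0 < r) (hr : r ≤ 1) : jumpDDF p r = p := by
  rw [jumpDDF, if_neg hr₀.ne', tsub_eq_zero_of_le hr, add_zero, min_eq_right hp]

lemma jumpDDF_le_one (p r : ℝ≥0∞) : jumpDDF p r ≤ 1 := by
  unfold jumpDDF
  split_ifs
  exacts [zero_le, min_le_left _ _]

lemma monotone_jumpDDF (p : ℝ≥0∞) : Monotone (jumpDDF p) := by
  intro a b hab
  rcases eq_or_ne a 0 with rfl | ha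
  · simp [jumpDDF]
  · have hb : b ≠ 0 := (pos_iff_ne_zero.2 ha).trans_le hab |>.ne'
    simp only [jumpDDF, if_neg ha, if_neg hb]
    gcongr

lemma continuousOn_jumpDDF (p : ℝ≥0∞) : ContinuousOn (jumpDDF p) (Ioi 0) := by
  have hc : Continuous fun r : ℝ≥0∞ => min 1 (p + (r - 1)) :=
    continuous_const.min (continuous_const.add (ENNReal.continuous_sub_right 1))
  exact hc.continuousOn.congr fun r hr => if_neg (ne_of_gt hr)

lemma isDDF_jumpDDF (p : ℝ≥0∞) : IsDDF (jumpDDF p) :=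
  isDDF_of_continuousOn (monotone_jumpDDF p) (jumpDDF_le_one p) (if_pos rfl)
    (by simp [jumpDDF]) (continuousOn_jumpDDF p)

lemma tensor_jumpDDF_min_one {T L : ℝ≥0∞ → ℝ≥0∞ → ℝ≥0∞} (hT : IsLeftContTNorm T)
    (hL : IsRightContLOp L) {p x : ℝ≥0∞} (hp : p ≤ 1) (hx₀ : 0 < x) (hx : x ≤ 1) :
    tensor L T (jumpDDF p) (min · 1) x = T p x := by
  rw [tensor, if_neg (hx.trans_lt one_lt_top).ne]
  apply le_antisymm
  · refine iSup_le fun r => iSup₂_le fun s hrs => ?_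
    have hr : r ≤ 1 := ((hL.le_left r s).trans hrs.le).trans hx
    have hs : s ≤ x := (hL.le_right r s).trans hrs.le
    have hfr : jumpDDF p r ≤ p := (monotone_jumpDDF p hr).trans_eq (jumpDDF_eq hp one_pos le_rfl)
    rw [min_eq_left (hs.trans hx)]
    calc T (jumpDDF p r) s ≤ T p s := hT.mono_left_s15 (hs.trans hx) hp hfr
      _ ≤ T p x := hT.mono_right hp hx hs
  · rw [hT.eq_iSup_Iio_right hp hx hx₀]
    refine iSup₂_le fun s hs => ?_
    obtain ⟨r, hr₀, hrs⟩ := hL.exists_pos_lt hs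
    have hr : r ≤ 1 := ((hL.le_left r s).trans hrs.le).trans hx
    have hval : T p s = T (jumpDDF p r) (min s 1) := by
      rw [jumpDDF_eq hp hr₀ hr, min_eq_left ((le_of_lt hs).trans hx)]
    exact hval ▸ le_iSup₂_of_le r s (le_iSup_of_le hrs le_rfl)

theorem tnorm_continuous_of_tensor_preserves_continuity (T L : ℝ≥0∞ → ℝ≥0∞ → ℝ≥0∞)
    (hT : IsLeftContTNorm T) (hL : IsRightContLOp L)
    (h : ∀ f g : ℝ≥0∞ → ℝ≥0∞, IsDDF f → ContinuousOn f (Set.Ioi 0) →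
      IsDDF g → Continuous g → ContinuousOn (tensor L T f g) (Set.Ioi 0)) :
    TNormContinuous T := by
  refine hT.tnormContinuous_of_continuousOn fun p hp =>
    hT.continuousOn_I01_of_continuousOn_Ioc hp ?_
  have htensor := h (jumpDDF p) (min · 1) (isDDF_jumpDDF p) (continuousOn_jumpDDF p)
    isDDF_min_one (continuous_id.min continuous_const)
  exact (htensor.mono Ioc_subset_Ioi_self).congr fun x hx =>
    (tensor_jumpDDF_min_one hT hL hp hx.1 hx.2).symm
end
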